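/- arXiv:0806.1325 — 10 statements merged into one kernel-verified Lean document; each statement's English description precedes it below -/
import Mathlib

section
/- For every s > 0, f is twice differentiable at s and f'(s) + s·f''(s) = (α + log(1+s))^β / (α^β·(1+s)); in particular f'(s) + s·f''(s) > 0. -/
open Real

noncomputable def fFJ (α β : ℝ) (s : ℝ) : ℝ :=
  (1 / ((β + 1) * α ^ β)) * ∫ x in (0:ℝ)..s, ((α + Real.log (1 + x)) ^ (β + 1) - α ^ (β + 1)) / x

/-!
With `F x = (α + log (1 + x)) ^ (β + 1)`, the integrand of `fFJ α β` is the slope of `F` at `0`,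
whose continuous extension across `0` is `dslope F 0`. Hence, by the fundamental theorem of
calculus, `f' = c • dslope F 0` on `(-1, ∞)` with `c = 1 / ((β + 1) α ^ β)`. Differentiating the
identity `x • dslope F 0 x = F x - F 0` gives `f' s + s f'' s = c F' s`, which is the claimed
positive expression.
-/

open Set Filter Topology MeasureTheory

theorem intervalIntegral.integral_slope_eq_integral_dslope (f : ℝ → ℝ) (a b : ℝ) :
    ∫ x in a..b, slope f a x = ∫ x in a..b, dslope f a x :=
  intervalIntegral.integral_congr_ae <| (Measure.ae_ne volume a).mono
    fun _ hx _ => (dslope_of_ne f hx).symm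

theorem hasDerivAt_integral_dslope {f : ℝ → ℝ} {a b u : ℝ} (hf : ContinuousOn f (Ioi a))
    (hfb : DifferentiableAt ℝ f b) (hb : a < b) (hu : a < u) :
    HasDerivAt (fun t => ∫ x in b..t, dslope f b x) (dslope f b u) u := by
  have hcont : ContinuousOn (dslope f b) (Ioi a) :=
    (continuousOn_dslope (Ioi_mem_nhds hb)).2 ⟨hf, hfb⟩
  refine intervalIntegral.integral_hasDerivAt_right ?_
    (hcont.stronglyMeasurableAtFilter isOpen_Ioi u hu) (hcont.continuousAt (Ioi_mem_nhds hu))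
  exact (hcont.mono fun x hx => (lt_min hb hu).trans_le hx.1).intervalIntegrable

theorem dslope_add_sub_smul_deriv_dslope {𝕜 E : Type*} [NontriviallyNormedField 𝕜]
    [NormedAddCommGroup E] [NormedSpace 𝕜 E] {f : 𝕜 → E} {a b : 𝕜} (hab : b ≠ a)
    (hf : DifferentiableAt 𝕜 f b) :
    dslope f a b + (b - a) • deriv (dslope f a) b = deriv f b := by
  have hprod : HasDerivAt (fun x => (x - a) • dslope f a x)
      ((b - a) • deriv (dslope f a) b + (1 : 𝕜) • dslope f a b) b :=
    ((hasDerivAt_id' b).sub_const a).smul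
      ((differentiableAt_dslope_of_ne hab).2 hf).hasDerivAt
  have hsub : (fun x => (x - a) • dslope f a x) = fun x => f x - f a :=
    funext (sub_smul_dslope f a)
  rw [hsub, one_smul, add_comm] at hprod
  exact hprod.unique (hf.hasDerivAt.sub_const (f a))

theorem hasDerivAt_add_log_rpow (α : ℝ) {p x : ℝ} (hp : 1 ≤ p) (hx : 1 + x ≠ 0) :
    HasDerivAt (fun y => (α + log (1 + y)) ^ p)
      (p * (α + log (1 + x)) ^ (p - 1) / (1 + x)) x := by
  have h := ((((hasDerivAt_id' x).const_add 1).log hx).const_add α).rpow_const (p := p) (Or.inr hp)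
  convert h using 1
  ring

theorem fFJ_eq_integral_dslope (α β u : ℝ) :
    fFJ α β u = 1 / ((β + 1) * α ^ β) *
      ∫ x in (0:ℝ)..u, dslope (fun y => (α + log (1 + y)) ^ (β + 1)) 0 x := by
  rw [fFJ, ← intervalIntegral.integral_slope_eq_integral_dslope]
  simp [slope_def_field]

theorem hasDerivAt_fFJ {α β u : ℝ} (hβ : 0 ≤ β) (hu : -1 < u) :
    HasDerivAt (fFJ α β)
      (1 / ((β + 1) * α ^ β) * dslope (fun y => (α + log (1 + y)) ^ (β + 1)) 0 u) u := by
  have hF : ∀ x, -1 < x → HasDerivAt (fun y => (α + log (1 + y)) ^ (β + 1))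
      ((β + 1) * (α + log (1 + x)) ^ (β + 1 - 1) / (1 + x)) x :=
    fun x hx => hasDerivAt_add_log_rpow α (by linarith) (by linarith)
  have hcont : ContinuousOn (fun y => (α + log (1 + y)) ^ (β + 1)) (Ioi (-1)) :=
    fun x hx => (hF x hx).continuousAt.continuousWithinAt
  rw [funext (fFJ_eq_integral_dslope α β)]
  exact (hasDerivAt_integral_dslope hcont (hF 0 (by norm_num)).differentiableAt
    (by norm_num) hu).const_mul _

theorem stmt_1 (α β : ℝ) (hβ : 0 ≤ β) (hαβ : β < α) (s : ℝ) (hs : 0 < s) :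
    DifferentiableAt ℝ (fFJ α β) s ∧
    DifferentiableAt ℝ (deriv (fFJ α β)) s ∧
    deriv (fFJ α β) s + s * deriv (deriv (fFJ α β)) s
      = (α + Real.log (1 + s)) ^ β / (α ^ β * (1 + s)) ∧
    0 < deriv (fFJ α β) s + s * deriv (deriv (fFJ α β)) s := by
  set F := fun y => (α + log (1 + y)) ^ (β + 1)
  set c := 1 / ((β + 1) * α ^ β)
  have hF : HasDerivAt F ((β + 1) * (α + log (1 + s)) ^ β / (1 + s)) s := by
    simpa using hasDerivAt_add_log_rpow α (p := β + 1) (by linarith) (by linarith)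
  have hderiv : deriv (fFJ α β) =ᶠ[𝓝 s] fun u => c * dslope F 0 u := by
    filter_upwards [Ioi_mem_nhds (show (-1 : ℝ) < s by linarith)] with u hu
    exact (hasDerivAt_fFJ hβ hu).deriv
  have hdslope : DifferentiableAt ℝ (dslope F 0) s :=
    (differentiableAt_dslope_of_ne hs.ne').2 hF.differentiableAt
  have heuler := dslope_add_sub_smul_deriv_dslope hs.ne' hF.differentiableAt
  rw [sub_zero, smul_eq_mul, hF.deriv] at heuler
  have hα : 0 < α := hβ.trans_lt hαβ
  have hsum : deriv (fFJ α β) s + s * deriv (deriv (fFJ α β)) s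
      = (α + log (1 + s)) ^ β / (α ^ β * (1 + s)) := by
    rw [hderiv.eq_of_nhds, hderiv.deriv_eq, deriv_const_mul c hdslope, ← mul_left_comm,
      ← mul_add, heuler]
    simp only [c]
    field_simp
  refine ⟨(hasDerivAt_fFJ hβ (by linarith)).differentiableAt,
    hderiv.differentiableAt_iff.2 (hdslope.const_mul c), hsum, hsum ▸ ?_⟩
  have := log_nonneg (show 1 ≤ 1 + s by linarith)
  positivity
end

section
/- The function ρ(r) tends to +∞ as r → ∞; that is, the improper integral ∫_0^∞ sqrt((α + log(1+t²))^β / (α^β·(1+t²))) dt diverges. -/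
open Real Filter

/-- The geodesic distance from the origin as a function of the Euclidean radius:
`ρ(r) = ∫_0^r sqrt((α + log(1+t²))^β / (α^β·(1+t²))) dt`. -/
noncomputable def rhoFJ (α β : ℝ) (r : ℝ) : ℝ :=
  ∫ t in (0:ℝ)..r, Real.sqrt ((α + Real.log (1 + t ^ 2)) ^ β / (α ^ β * (1 + t ^ 2)))

theorem stmt_2 (α β : ℝ) (hβ : 0 ≤ β) (hαβ : β < α) :
    Filter.Tendsto (rhoFJ α β) Filter.atTop Filter.atTop := by
  have hα : 0 < α := lt_of_le_of_lt hβ hαβ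
  have hpos : ∀ t : ℝ, (0:ℝ) < 1 + t ^ 2 := fun t => by positivity
  have hcont : Continuous fun t : ℝ =>
      Real.sqrt ((α + Real.log (1 + t ^ 2)) ^ β / (α ^ β * (1 + t ^ 2))) := by
    apply Continuous.sqrt
    apply Continuous.div
    · apply Continuous.rpow_const
      · exact continuous_const.add (((continuous_const.add (continuous_pow 2)).log
          (fun t => (hpos t).ne')))
      · intro t; right; exact hβ
    · exact continuous_const.mul (continuous_const.add (continuous_pow 2))
    · intro t
      have : (0:ℝ) < α ^ β * (1 + t ^ 2) := by positivity
      exact this.ne'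
  -- lower bound: log (1 + r) ≤ rhoFJ α β r for r ≥ 0
  have key : ∀ r : ℝ, 0 ≤ r → Real.log (1 + r) ≤ rhoFJ α β r := by
    intro r hr
    have hlog : Real.log (1 + r) = ∫ t in (0:ℝ)..r, (1 + t)⁻¹ := by
      have h1 : ∫ t in (0:ℝ)..r, (1 + t)⁻¹ = ∫ x in (1:ℝ)..(1 + r), x⁻¹ := by
        simpa using intervalIntegral.integral_comp_add_left (a := (0:ℝ)) (b := r)
          (fun x => x⁻¹) 1
      rw [h1, integral_inv]
      · rw [div_one]
      · intro h
        rcases h with h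
        have h1 : (1:ℝ) ≤ 0 ∨ (1 + r : ℝ) ≤ 0 := by
          rcases Set.mem_uIcc.mp h with ⟨h2, _⟩ | ⟨_, h3⟩
          · left; linarith
          · right; linarith
        rcases h1 with h1 | h1 <;> linarith
    rw [hlog, rhoFJ]
    apply intervalIntegral.integral_mono_on hr
    · apply ContinuousOn.intervalIntegrable
      apply ContinuousOn.inv₀ (by fun_prop)
      intro t ht
      rw [Set.uIcc_of_le hr] at ht
      have := ht.1; intro h; linarith
    · exact hcont.intervalIntegrable _ _
    · intro t ht
      have ht0 : 0 ≤ t := ht.1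
      have hlt : (0:ℝ) < 1 + t := by linarith
      have hbase : (0:ℝ) < α + Real.log (1 + t ^ 2) := by
        have : 0 ≤ Real.log (1 + t ^ 2) := Real.log_nonneg (by nlinarith)
        linarith
      rw [Real.le_sqrt (by positivity)]
      rw [inv_pow]
      have h2 : (1 + t ^ 2) ≤ (1 + t) ^ 2 := by nlinarith
      have h3 : ((1 + t) ^ 2)⁻¹ ≤ (1 + t ^ 2)⁻¹ := by
        apply inv_anti₀ (hpos t) h2
      refine h3.trans ?_
      have hnum : α ^ β ≤ (α + Real.log (1 + t ^ 2)) ^ β := by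
        apply Real.rpow_le_rpow hα.le _ hβ
        have : 0 ≤ Real.log (1 + t ^ 2) := Real.log_nonneg (by nlinarith)
        linarith
      rw [div_eq_mul_inv, mul_inv, ← mul_assoc]
      have hαβpos : (0:ℝ) < α ^ β := Real.rpow_pos_of_pos hα β
      have : 1 ≤ (α + Real.log (1 + t ^ 2)) ^ β * (α ^ β)⁻¹ := by
        rw [← div_eq_mul_inv, le_div_iff₀ hαβpos, one_mul]
        exact hnum
      calc (1 + t ^ 2)⁻¹ = 1 * (1 + t ^ 2)⁻¹ := (one_mul _).symm
        _ ≤ (α + Real.log (1 + t ^ 2)) ^ β * (α ^ β)⁻¹ * (1 + t ^ 2)⁻¹ := by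
            apply mul_le_mul_of_nonneg_right this (by positivity)
      exact div_nonneg (Real.rpow_nonneg hbase.le β) (by positivity)
  have hlogtend : Tendsto (fun r : ℝ => Real.log (1 + r)) atTop atTop :=
    Real.tendsto_log_atTop.comp (tendsto_atTop_add_const_left _ 1 tendsto_id)
  apply tendsto_atTop_mono' _ _ hlogtend
  filter_upwards [eventually_ge_atTop (0:ℝ)] with r hr
  exact key r hr
end

section
/- For every x > 0, G(x) > 0. -/
open Real

noncomputable def GFJ (α β : ℝ) (x : ℝ) : ℝ :=
  (α + Real.log (1 + x)) ^ (β + 1) * (1 + x) - (β + 1) * x * (α + Real.log (1 + x)) ^ β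
    - α ^ (β + 1) * (1 + x)

/-!
Substituting `1 + x = exp t` gives `G x = exp t * H t` with `H = logGFJ α β`. Now `H 0 = 0` and
`H' t = (β+1) (1 - exp (-t)) (α + t - β) (α + t)^(β-1)`, which is positive for `t > 0` since `α > β`;
so `H t > 0` for `t > 0`, i.e. `G x > 0` for `x > 0`.
-/

noncomputable def logGFJ (α β t : ℝ) : ℝ :=
  (α + t) ^ (β + 1) - α ^ (β + 1) - (β + 1) * (1 - exp (-t)) * (α + t) ^ β

lemma GFJ_eq_mul_logGFJ (α β : ℝ) {x : ℝ} (hx : 0 < 1 + x) :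
    GFJ α β x = (1 + x) * logGFJ α β (log (1 + x)) := by
  have hexp : exp (-log (1 + x)) = (1 + x)⁻¹ := by rw [exp_neg, exp_log hx]
  simp only [GFJ, logGFJ, hexp]
  field_simp
  ring

lemma logGFJ_zero (α β : ℝ) : logGFJ α β 0 = 0 := by
  simp [logGFJ]

lemma hasDerivAt_logGFJ (α β : ℝ) {t : ℝ} (ht : 0 < α + t) :
    HasDerivAt (logGFJ α β)
      ((β + 1) * (1 - exp (-t)) * ((α + t - β) * (α + t) ^ (β - 1))) t := by
  have hshift : HasDerivAt (fun s => α + s) 1 t := (hasDerivAt_id t).const_add α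
  have hpow_succ := hshift.rpow_const (p := β + 1) (Or.inl ht.ne')
  have hpow := hshift.rpow_const (p := β) (Or.inl ht.ne')
  have hexp : HasDerivAt (fun s => 1 - exp (-s)) (exp (-t)) t := by
    simpa using ((hasDerivAt_id t).neg.exp).const_sub 1
  have hsplit : (α + t) ^ β = (α + t) ^ (β - 1) * (α + t) := by
    rw [← rpow_add_one ht.ne', sub_add_cancel]
  refine ((hpow_succ.sub_const (α ^ (β + 1))).sub ((hexp.const_mul (β + 1)).mul hpow)).congr_deriv ?_
  rw [add_sub_cancel_right, hsplit]
  ring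

lemma strictMonoOn_logGFJ {α β : ℝ} (hβ : 0 ≤ β) (hαβ : β < α) :
    StrictMonoOn (logGFJ α β) (Set.Ici 0) := by
  have hderiv (t : ℝ) (ht : 0 ≤ t) := hasDerivAt_logGFJ α β (show 0 < α + t by linarith)
  refine strictMonoOn_of_deriv_pos (convex_Ici 0)
    (fun t ht => (hderiv t ht).continuousAt.continuousWithinAt) fun t ht => ?_
  rw [interior_Ici, Set.mem_Ioi] at ht
  rw [(hderiv t ht.le).deriv]
  have hexp : 0 < 1 - exp (-t) := sub_pos.mpr (exp_lt_one_iff.mpr (neg_lt_zero.mpr ht))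
  have hgap : 0 < α + t - β := by linarith
  have hbase : 0 < α + t := by linarith
  positivity

lemma logGFJ_pos {α β t : ℝ} (hβ : 0 ≤ β) (hαβ : β < α) (ht : 0 < t) : 0 < logGFJ α β t := by
  simpa [logGFJ_zero] using strictMonoOn_logGFJ hβ hαβ Set.self_mem_Ici ht.le ht

theorem stmt_4 (α β : ℝ) (hβ : 0 ≤ β) (hαβ : β < α) (x : ℝ) (hx : 0 < x) :
    0 < GFJ α β x := by
  have hx1 : 0 < 1 + x := by linarith
  rw [GFJ_eq_mul_logGFJ α β hx1]
  exact mul_pos hx1 (logGFJ_pos hβ hαβ (log_pos (by linarith)))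
end

section
/- The second derivative of f has a limit as s → 0 from the right, and lim_{s→0+} f''(s) = −(α−β)/(2α). -/
/-!
Write `f = c ∫₀ˢ H(x)/x dx` with `H(x) = (α + log (1 + x))^(β+1) - α^(β+1)` and `H 0 = 0`.
For `s > 0` the fundamental theorem of calculus gives `f''(s) = c (s H'(s) - H(s)) / s²`, and
L'Hôpital's rule sends this to `c H''(0) / 2`; since `H''(0) = (β + 1) α^(β-1) (β - α)`, this is
`-(α - β) / (2α)`.
-/

open Real Filter

open Set Topology MeasureTheory

section IntegralDivSelf

variable {h h' h'' : ℝ → ℝ}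

/-- Where `h 0 = 0`, the integrand `h x / x` agrees on `(0, s]` with `dslope h 0`, which is
continuous on `[0, s]`. -/
theorem intervalIntegrable_div_self (hd : ∀ x, 0 ≤ x → DifferentiableAt ℝ h x) (h0 : h 0 = 0)
    {s : ℝ} (hs : 0 ≤ s) : IntervalIntegrable (fun x => h x / x) volume 0 s := by
  have hcont : ContinuousOn (dslope h 0) (uIcc 0 s) := by
    rw [uIcc_of_le hs]
    intro x hx
    rcases eq_or_ne x 0 with rfl | hx0
    · exact (continuousAt_dslope_same.mpr (hd 0 le_rfl)).continuousWithinAt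
    · exact ((continuousWithinAt_dslope_of_ne hx0).mpr
        (hd x hx.1).continuousAt.continuousWithinAt)
  refine hcont.intervalIntegrable.congr fun x hx => ?_
  rw [uIoc_of_le hs] at hx
  simp [dslope_of_ne h hx.1.ne', slope_def_field, h0]

theorem hasDerivAt_integral_div_self (hd : ∀ x, 0 ≤ x → DifferentiableAt ℝ h x) (h0 : h 0 = 0)
    {s : ℝ} (hs : 0 < s) : HasDerivAt (fun u => ∫ x in (0 : ℝ)..u, h x / x) (h s / s) s := by
  have hcont : ContinuousOn (fun x => h x / x) (Ioi 0) := fun x hx =>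
    ((hd x (le_of_lt hx)).continuousAt.div continuousAt_id (ne_of_gt hx)).continuousWithinAt
  exact intervalIntegral.integral_hasDerivAt_right (intervalIntegrable_div_self hd h0 hs.le)
    (hcont.stronglyMeasurableAtFilter isOpen_Ioi s hs) (hcont.continuousAt (Ioi_mem_nhds hs))

theorem deriv_deriv_integral_div_self (hh : ∀ x, 0 ≤ x → HasDerivAt h (h' x) x) (h0 : h 0 = 0)
    {s : ℝ} (hs : 0 < s) :
    deriv (deriv fun u => ∫ x in (0 : ℝ)..u, h x / x) s = (h' s * s - h s) / s ^ 2 := by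
  have hd : ∀ x, 0 ≤ x → DifferentiableAt ℝ h x := fun x hx => (hh x hx).differentiableAt
  have hderiv : deriv (fun u => ∫ x in (0 : ℝ)..u, h x / x) =ᶠ[𝓝 s] fun u => h u / u := by
    filter_upwards [Ioi_mem_nhds hs] with u hu
    exact (hasDerivAt_integral_div_self hd h0 hu).deriv
  rw [hderiv.deriv_eq]
  exact ((hh s hs.le).div (hasDerivAt_id' s) hs.ne').deriv.trans (by rw [mul_one])

/-- L'Hôpital's rule: the numerator has derivative `s * h'' s` and the denominator `2 * s`. -/
theorem tendsto_mul_sub_div_sq (hh : ∀ x, 0 ≤ x → HasDerivAt h (h' x) x)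
    (hh' : ∀ x, 0 ≤ x → HasDerivAt h' (h'' x) x) (h0 : h 0 = 0)
    (hc : ContinuousWithinAt h'' (Ioi 0) 0) :
    Tendsto (fun s => (h' s * s - h s) / s ^ 2) (𝓝[>] 0) (𝓝 (h'' 0 / 2)) := by
  have hnum : Tendsto (fun s => h' s * s - h s) (𝓝[>] 0) (𝓝 0) := by
    have hcont : ContinuousAt (fun s => h' s * s - h s) 0 :=
      ((hh' 0 le_rfl).continuousAt.mul continuousAt_id).sub (hh 0 le_rfl).continuousAt
    simpa [h0] using hcont.tendsto.mono_left nhdsWithin_le_nhds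
  have hden : Tendsto (fun s : ℝ => s ^ 2) (𝓝[>] 0) (𝓝 0) := by
    simpa using ((continuous_pow 2).tendsto (0 : ℝ)).mono_left nhdsWithin_le_nhds
  refine HasDerivAt.lhopital_zero_nhdsGT (f' := fun x => x * h'' x) (g' := fun x => 2 * x)
    ?_ ?_ ?_ hnum hden ?_
  · filter_upwards [self_mem_nhdsWithin] with x hx
    exact (((hh' x (le_of_lt hx)).mul (hasDerivAt_id' x)).sub (hh x (le_of_lt hx))).congr_deriv
      (by ring)
  · filter_upwards with x
    simpa using hasDerivAt_pow 2 x
  · filter_upwards [self_mem_nhdsWithin] with x hx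
    exact mul_ne_zero two_ne_zero (ne_of_gt hx)
  · refine (hc.tendsto.div_const 2).congr' ?_
    filter_upwards [self_mem_nhdsWithin] with x hx
    rw [mul_comm 2 x, mul_div_mul_left _ _ (ne_of_gt hx)]

theorem tendsto_deriv_deriv_integral_div_self (hh : ∀ x, 0 ≤ x → HasDerivAt h (h' x) x)
    (hh' : ∀ x, 0 ≤ x → HasDerivAt h' (h'' x) x) (h0 : h 0 = 0)
    (hc : ContinuousWithinAt h'' (Ioi 0) 0) :
    Tendsto (deriv (deriv fun u => ∫ x in (0 : ℝ)..u, h x / x)) (𝓝[>] 0) (𝓝 (h'' 0 / 2)) := by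
  refine (tendsto_mul_sub_div_sq hh hh' h0 hc).congr' ?_
  filter_upwards [self_mem_nhdsWithin] with s hs
  exact (deriv_deriv_integral_div_self hh h0 hs).symm

end IntegralDivSelf

section FJNumerator

variable {α : ℝ} (β : ℝ)

theorem add_log_one_add_pos (hα : 0 < α) {x : ℝ} (hx : 0 ≤ x) : 0 < α + log (1 + x) := by
  have := log_nonneg (by linarith : (1 : ℝ) ≤ 1 + x)
  linarith

theorem hasDerivAt_add_log_one_add {x : ℝ} (hx : -1 < x) :
    HasDerivAt (fun y => α + log (1 + y)) (1 / (1 + x)) x := by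
  have h1x : (1 : ℝ) + x ≠ 0 := by linarith
  simpa [one_div] using ((hasDerivAt_log h1x).comp x ((hasDerivAt_id x).const_add 1)).const_add α

noncomputable def fjNum (α β x : ℝ) : ℝ := (α + log (1 + x)) ^ (β + 1) - α ^ (β + 1)

noncomputable def fjNumDeriv (α β x : ℝ) : ℝ := (β + 1) * (α + log (1 + x)) ^ β / (1 + x)

noncomputable def fjNumDeriv2 (α β x : ℝ) : ℝ :=
  (β + 1) * (β * (α + log (1 + x)) ^ (β - 1) - (α + log (1 + x)) ^ β) / (1 + x) ^ 2

theorem hasDerivAt_fjNum (hα : 0 < α) {x : ℝ} (hx : 0 ≤ x) :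
    HasDerivAt (fjNum α β) (fjNumDeriv α β x) x := by
  refine (((hasDerivAt_add_log_one_add (by linarith)).rpow_const (p := β + 1)
    (Or.inl (add_log_one_add_pos hα hx).ne')).sub_const (α ^ (β + 1))).congr_deriv ?_
  rw [fjNumDeriv, add_sub_cancel_right]
  ring

theorem hasDerivAt_fjNumDeriv (hα : 0 < α) {x : ℝ} (hx : 0 ≤ x) :
    HasDerivAt (fjNumDeriv α β) (fjNumDeriv2 α β x) x := by
  have hx1 : (1 : ℝ) + x ≠ 0 := by linarith
  refine ((((hasDerivAt_add_log_one_add (by linarith)).rpow_const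
    (Or.inl (add_log_one_add_pos hα hx).ne')).const_mul (β + 1)).div
    ((hasDerivAt_id' x).const_add 1) hx1).congr_deriv ?_
  rw [fjNumDeriv2]
  field_simp

theorem continuousAt_fjNumDeriv2_zero (hα : 0 < α) : ContinuousAt (fjNumDeriv2 α β) 0 := by
  have hlog : ContinuousAt (fun y : ℝ => α + log (1 + y)) 0 :=
    (hasDerivAt_add_log_one_add (by norm_num)).continuousAt
  have hne : α + log (1 + 0) ≠ 0 := by simpa using hα.ne'
  unfold fjNumDeriv2
  exact (continuousAt_const.mul ((continuousAt_const.mul (hlog.rpow_const (Or.inl hne))).sub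
    (hlog.rpow_const (Or.inl hne)))).div (by fun_prop) (by norm_num)

theorem fjNumDeriv2_zero (hα : 0 < α) :
    fjNumDeriv2 α β 0 = (β + 1) * (β * (α ^ β / α) - α ^ β) := by
  simp [fjNumDeriv2, rpow_sub hα]

end FJNumerator

theorem stmt_6 (α β : ℝ) (hβ : 0 ≤ β) (hαβ : β < α) :
    Filter.Tendsto (fun s => deriv (deriv (fFJ α β)) s)
      (nhdsWithin 0 (Set.Ioi 0)) (nhds (-(α - β) / (2 * α))) := by
  have hα : 0 < α := hβ.trans_lt hαβ
  have hf : fFJ α β = fun s => 1 / ((β + 1) * α ^ β) * ∫ x in (0 : ℝ)..s, fjNum α β x / x := rfl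
  have hlim := (tendsto_deriv_deriv_integral_div_self (fun x => hasDerivAt_fjNum β hα)
    (fun x => hasDerivAt_fjNumDeriv β hα) (by simp [fjNum])
    (continuousAt_fjNumDeriv2_zero β hα).continuousWithinAt).const_mul (1 / ((β + 1) * α ^ β))
  have hval : 1 / ((β + 1) * α ^ β) * (fjNumDeriv2 α β 0 / 2) = -(α - β) / (2 * α) := by
    have hpow : α ^ β ≠ 0 := (rpow_pos_of_pos hα β).ne'
    have hβ1 : β + 1 ≠ 0 := by linarith
    rw [fjNumDeriv2_zero β hα]
    field_simp
    ring
  simpa only [hf, deriv_const_mul_field', hval] using hlim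
end

section
/- For every r > 0, the derivative at r of the function r ↦ r·u'(r) is strictly negative; explicitly, (1/(4r))·d/dr( r·u'(r) ) = −( α(α−β) + β·r² + (2α−β)·log(1+r²) + (log(1+r²))² ) / ( (1+r²)²·(α + log(1+r²))² ), and the numerator α(α−β) + β·r² + (2α−β)·log(1+r²) + (log(1+r²))² is strictly positive. -/
/-!
With `L = log (1 + r²)`, the logarithm splits `u` into `β log (α + L) - β log α - L`, so
`r u'(r) = -2 · r² / (1 + r²) · (α - β + L) / (α + L)`. Both factors are positive and increasing
in `r` (the second is `1 - β / (α + L)`), and the product rule gives the stated closed form.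
-/

open Real

/-- `u(r) = log( (α + log(1+r²))^β / (α^β·(1+r²)) )`. -/
noncomputable def uFJ (α β : ℝ) (r : ℝ) : ℝ :=
  Real.log ((α + Real.log (1 + r ^ 2)) ^ β / (α ^ β * (1 + r ^ 2)))

section

variable {α β : ℝ}

lemma log_one_add_sq_nonneg (t : ℝ) : 0 ≤ log (1 + t ^ 2) :=
  log_nonneg (le_add_of_nonneg_right (sq_nonneg t))

lemma hasDerivAt_one_add_sq (t : ℝ) : HasDerivAt (fun s : ℝ => 1 + s ^ 2) (2 * t) t := by
  simpa using (hasDerivAt_pow 2 t).const_add 1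

lemma hasDerivAt_log_one_add_sq (t : ℝ) :
    HasDerivAt (fun s => log (1 + s ^ 2)) (2 * t / (1 + t ^ 2)) t :=
  (hasDerivAt_one_add_sq t).log (by positivity)

lemma uFJ_eq (hα : 0 < α) :
    uFJ α β = fun t => β * log (α + log (1 + t ^ 2)) - β * log α - log (1 + t ^ 2) := by
  funext t
  have hA : 0 < α + log (1 + t ^ 2) := by linarith [log_one_add_sq_nonneg t]
  rw [uFJ, log_div (rpow_pos_of_pos hA β).ne' (by positivity), log_rpow hA,
    log_mul (rpow_pos_of_pos hα β).ne' (by positivity), log_rpow hα]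
  ring

lemma hasDerivAt_uFJ (hα : 0 < α) (t : ℝ) :
    HasDerivAt (uFJ α β)
      (-2 * t / (1 + t ^ 2) * ((α - β + log (1 + t ^ 2)) / (α + log (1 + t ^ 2)))) t := by
  have hA : 0 < α + log (1 + t ^ 2) := by linarith [log_one_add_sq_nonneg t]
  have hL := hasDerivAt_log_one_add_sq t
  rw [uFJ_eq hα]
  refine ((((hL.const_add α).log hA.ne').const_mul β).sub_const (β * log α) |>.sub hL).congr_deriv ?_
  field_simp
  ring

lemma mul_deriv_uFJ (hα : 0 < α) :
    (fun t => t * deriv (uFJ α β) t) = fun t =>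
      -2 * (t ^ 2 / (1 + t ^ 2)) * ((α - β + log (1 + t ^ 2)) / (α + log (1 + t ^ 2))) := by
  funext t
  rw [(hasDerivAt_uFJ hα t).deriv]
  ring

lemma hasDerivAt_mul_deriv_uFJ (hα : 0 < α) (r : ℝ) :
    HasDerivAt (fun t => t * deriv (uFJ α β) t)
      (-(4 * r) * (α * (α - β) + β * r ^ 2 + (2 * α - β) * log (1 + r ^ 2)
          + log (1 + r ^ 2) ^ 2) / ((1 + r ^ 2) ^ 2 * (α + log (1 + r ^ 2)) ^ 2)) r := by
  have hA : 0 < α + log (1 + r ^ 2) := by linarith [log_one_add_sq_nonneg r]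
  have hL := hasDerivAt_log_one_add_sq r
  have hQ := (hasDerivAt_pow 2 r).div (hasDerivAt_one_add_sq r) (by positivity)
  have hR := (hL.const_add (α - β)).div (hL.const_add α) hA.ne'
  rw [mul_deriv_uFJ hα]
  refine ((hQ.const_mul (-2)).mul hR).congr_deriv ?_
  simp only [Pi.div_apply]
  field_simp
  ring

end

lemma numerator_pos {α β L x : ℝ} (hβ : 0 ≤ β) (hαβ : β < α) (hL : 0 ≤ L) (hx : 0 ≤ x) :
    0 < α * (α - β) + β * x + (2 * α - β) * L + L ^ 2 := by
  have hα : 0 < α := hβ.trans_lt hαβ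
  have : 0 < α * (α - β) := mul_pos hα (sub_pos.mpr hαβ)
  have : 0 ≤ (2 * α - β) * L := mul_nonneg (by linarith) hL
  positivity

theorem stmt_7 (α β : ℝ) (hβ : 0 ≤ β) (hαβ : β < α) (r : ℝ) (hr : 0 < r) :
    (1 / (4 * r)) * deriv (fun t => t * deriv (uFJ α β) t) r
      = -(α * (α - β) + β * r ^ 2 + (2 * α - β) * Real.log (1 + r ^ 2)
            + (Real.log (1 + r ^ 2)) ^ 2)
          / ((1 + r ^ 2) ^ 2 * (α + Real.log (1 + r ^ 2)) ^ 2) ∧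
    0 < α * (α - β) + β * r ^ 2 + (2 * α - β) * Real.log (1 + r ^ 2)
          + (Real.log (1 + r ^ 2)) ^ 2 ∧
    deriv (fun t => t * deriv (uFJ α β) t) r < 0 := by
  have hA : 0 < α + log (1 + r ^ 2) := by linarith [log_one_add_sq_nonneg r]
  have hN := numerator_pos hβ hαβ (log_one_add_sq_nonneg r) (sq_nonneg r)
  rw [(hasDerivAt_mul_deriv_uFJ (hβ.trans_lt hαβ) r).deriv]
  refine ⟨?_, hN, ?_⟩
  · field_simp
  · exact div_neg_of_neg_of_pos (by nlinarith) (by positivity)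
end

section
/- H(α) = 0, the derivative of H at α equals 0, and the second derivative of H is strictly positive at every y > α. -/
/- Since `β ≤ α ≤ y`, `β log (y / α) ≤ β (y - α) / α ≤ y - α`, i.e. `y^β ≤ α^β e^{y-α}`.
In `H''(y)` this bounds `β α^{β+1} e^{y-α}` below by `β α y^β`; together with `e^{y-α} ≥ 1`
it gives `H''(y) ≥ y^β (β (α - β) + (y - β)) > 0` for `y > α`. At `y = α` the exponential
factor is `1`, and `H(α) = H'(α) = 0` are identities. -/

open Real

noncomputable def HFJ (α β : ℝ) (y : ℝ) : ℝ :=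
  β * α ^ (β + 1) * Real.exp (y - α) - β * α ^ (β + 1) - y ^ (β + 2)
    + y ^ (β + 1) * Real.exp (y - α) - y ^ (β + 1) + α ^ (β + 1) * y

lemma rpow_le_rpow_mul_exp_sub {a y β : ℝ} (ha : 0 < a) (hay : a ≤ y) (hβ : 0 ≤ β)
    (hβa : β ≤ a) : y ^ β ≤ a ^ β * exp (y - a) := by
  have hy : 0 < y := ha.trans_le hay
  rw [rpow_def_of_pos hy, rpow_def_of_pos ha, ← exp_add, exp_le_exp]
  have hlog : log y - log a ≤ (y - a) / a := by
    rw [← log_div hy.ne' ha.ne', sub_div, div_self ha.ne']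
    exact log_le_sub_one_of_pos (div_pos hy ha)
  have hscale : β * ((y - a) / a) ≤ y - a := by
    rw [mul_div_assoc']
    exact div_le_of_le_mul₀ ha.le (by linarith) (by nlinarith)
  nlinarith [mul_le_mul_of_nonneg_left hlog hβ]

lemma hasDerivAt_rpow_add_one {p y : ℝ} (h : y ≠ 0 ∨ 0 ≤ p) :
    HasDerivAt (fun y : ℝ => y ^ (p + 1)) ((p + 1) * y ^ p) y := by
  simpa using hasDerivAt_rpow_const (p := p + 1) (h.imp_right fun hp => by linarith)

lemma hasDerivAt_exp_sub (a y : ℝ) : HasDerivAt (fun y : ℝ => exp (y - a)) (exp (y - a)) y := by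
  simpa using ((hasDerivAt_id y).sub_const a).exp

variable {α β : ℝ}

lemma hasDerivAt_HFJ (hβ : 0 ≤ β) (y : ℝ) :
    HasDerivAt (HFJ α β)
      ((β * α ^ (β + 1) + (β + 1) * y ^ β + y ^ (β + 1)) * exp (y - α)
        - (β + 2) * y ^ (β + 1) - (β + 1) * y ^ β + α ^ (β + 1)) y := by
  have h1 := hasDerivAt_rpow_add_one (y := y) (Or.inr hβ)
  have h2 : HasDerivAt (fun y : ℝ => y ^ (β + 2)) ((β + 2) * y ^ (β + 1)) y := by
    have h := hasDerivAt_rpow_add_one (p := β + 1) (y := y) (Or.inr (by linarith))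
    rwa [show β + 1 + 1 = β + 2 by ring] at h
  have he := hasDerivAt_exp_sub α y
  exact ((((((he.const_mul _).sub_const _).fun_sub h2).fun_add (h1.fun_mul he)).fun_sub h1).fun_add
    ((hasDerivAt_id' y).const_mul _)).congr_deriv (by ring)

lemma deriv_HFJ (hβ : 0 ≤ β) :
    deriv (HFJ α β) = fun y => (β * α ^ (β + 1) + (β + 1) * y ^ β + y ^ (β + 1)) * exp (y - α)
      - (β + 2) * y ^ (β + 1) - (β + 1) * y ^ β + α ^ (β + 1) :=
  funext fun y => (hasDerivAt_HFJ hβ y).deriv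

lemma hasDerivAt_deriv_HFJ (hβ : 0 ≤ β) {y : ℝ} (hy : y ≠ 0) :
    HasDerivAt (deriv (HFJ α β))
      ((β * α ^ (β + 1) + β * (β + 1) * y ^ (β - 1) + 2 * (β + 1) * y ^ β + y ^ (β + 1))
        * exp (y - α) - (β + 1) * (β + 2) * y ^ β - β * (β + 1) * y ^ (β - 1)) y := by
  have h0 : HasDerivAt (fun y : ℝ => y ^ β) (β * y ^ (β - 1)) y :=
    hasDerivAt_rpow_const (Or.inl hy)
  have h1 := hasDerivAt_rpow_add_one (p := β) (Or.inl hy)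
  have he := hasDerivAt_exp_sub α y
  rw [deriv_HFJ hβ]
  exact (((((((hasDerivAt_const y _).fun_add (h0.const_mul _)).fun_add h1).fun_mul he).fun_sub
    (h1.const_mul _)).fun_sub (h0.const_mul _)).add_const _).congr_deriv (by ring)

lemma HFJ_second_deriv_pos (hβ : 0 ≤ β) (hαβ : β < α) {y : ℝ} (hy : α < y) :
    0 < (β * α ^ (β + 1) + β * (β + 1) * y ^ (β - 1) + 2 * (β + 1) * y ^ β + y ^ (β + 1))
        * exp (y - α) - (β + 1) * (β + 2) * y ^ β - β * (β + 1) * y ^ (β - 1) := by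
  have hα : 0 < α := hβ.trans_lt hαβ
  have hy0 : 0 < y := hα.trans hy
  have hE : 1 ≤ exp (y - α) := one_le_exp (by linarith)
  have hpow := rpow_le_rpow_mul_exp_sub hα hy.le hβ hαβ.le
  have hp : 0 < y ^ β := rpow_pos_of_pos hy0 β
  have hq : 0 ≤ y ^ (β - 1) := rpow_nonneg hy0.le _
  rw [rpow_add_one hα.ne', rpow_add_one hy0.ne']
  linarith [mul_le_mul_of_nonneg_left hpow (mul_nonneg hβ hα.le),
    mul_nonneg (mul_nonneg hβ (by linarith : (0 : ℝ) ≤ β + 1)) (mul_nonneg hq (sub_nonneg.2 hE)),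
    mul_nonneg (mul_nonneg (by linarith : (0 : ℝ) ≤ β + 1) hp.le) (sub_nonneg.2 hE),
    mul_nonneg (mul_nonneg hp.le hy0.le) (sub_nonneg.2 hE),
    mul_pos hp (by nlinarith : 0 < β * (α - β) + (y - β))]

theorem stmt_8 (α β : ℝ) (hβ : 0 ≤ β) (hαβ : β < α) :
    HFJ α β α = 0 ∧ deriv (HFJ α β) α = 0 ∧
    ∀ y : ℝ, α < y → 0 < deriv (deriv (HFJ α β)) y := by
  have hα : 0 < α := hβ.trans_lt hαβ
  refine ⟨?_, ?_, fun y hy => ?_⟩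
  · have hsucc : α ^ (β + 2) = α ^ (β + 1) * α := by
      rw [← rpow_add_one hα.ne']; ring_nf
    simp only [HFJ, sub_self, exp_zero, hsucc]
    ring
  · simp only [deriv_HFJ hβ, sub_self, exp_zero]
    ring
  · rw [(hasDerivAt_deriv_HFJ hβ (hα.trans hy).ne').deriv]
    exact HFJ_second_deriv_pos hβ hαβ hy
end

section
/- For every y ≥ α, I(y) > 0. -/
open Real

noncomputable def IFJ (α β : ℝ) (y : ℝ) : ℝ :=
  β * α ^ (β + 1) * Real.exp (y - α) + y ^ β * (y * Real.exp (y - α) - β * (β + 1))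

theorem stmt_9 (α β : ℝ) (hβ : 0 ≤ β) (hαβ : β < α) (y : ℝ) (hy : α ≤ y) :
    0 < IFJ α β y := by
  have hα : 0 < α := lt_of_le_of_lt hβ hαβ
  have hy0 : 0 < y := lt_of_lt_of_le hα hy
  have key : y ^ β ≤ α ^ β * Real.exp (y - α) := by
    rw [Real.rpow_def_of_pos hy0, Real.rpow_def_of_pos hα, ← Real.exp_add]
    apply Real.exp_le_exp.mpr
    have h1 : Real.log (y / α) ≤ y / α - 1 := Real.log_le_sub_one_of_pos (by positivity)
    rw [Real.log_div hy0.ne' hα.ne'] at h1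
    have h2 : α * (Real.log y - Real.log α) ≤ y - α := by
      have h3 : α * (Real.log y - Real.log α) ≤ α * (y / α - 1) :=
        mul_le_mul_of_nonneg_left h1 hα.le
      have h4 : α * (y / α - 1) = y - α := by field_simp
      linarith
    have hL : 0 ≤ Real.log y - Real.log α := sub_nonneg.2 (Real.log_le_log hα hy)
    nlinarith [mul_le_mul_of_nonneg_right hαβ.le hL]
  have hA : 0 < α ^ β := Real.rpow_pos_of_pos hα β
  have hY : α ^ β ≤ y ^ β := Real.rpow_le_rpow hα.le hy hβ
  have hE : (1 : ℝ) ≤ Real.exp (y - α) := Real.one_le_exp (by linarith)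
  have hEpos : 0 < Real.exp (y - α) := Real.exp_pos _
  unfold IFJ
  rw [Real.rpow_add_one hα.ne' β]
  set E := Real.exp (y - α)
  set A := α ^ β
  set Y := y ^ β
  nlinarith [mul_le_mul_of_nonneg_left key (mul_nonneg hβ (by linarith : (0:ℝ) ≤ β + 1)),
    mul_le_mul_of_nonneg_right (mul_le_mul hY hy hα.le (by positivity)) hEpos.le,
    mul_pos (mul_pos hEpos hA) (mul_pos (by linarith : (0:ℝ) < β + 1) (by linarith : (0:ℝ) < α - β))]
end

section
/- The expression f''(s) + s·f'''(s) − s·(f''(s))² / f'(s) tends to −(α−β)/(2α) as s → 0 from the right. -/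
open Real Filter

/-! With `φ x = (α + log (1 + x)) ^ (β + 1) / ((β + 1) α ^ β)`, `f := fFJ α β` is the primitive of
`dslope φ 0` from `0`. Hence for `s > 0`: `f' = (φ s - φ 0) / s`, `f'' = (φ' - f') / s` and
`f''' = (φ'' - 2 f'') / s`, so the expression equals `φ'' - f'' - s f''² / f'`. As `s → 0⁺`,
`f' → φ' 0 = 1` and, by l'Hôpital, `f'' → φ'' 0 / 2`; the limit is `φ'' 0 / 2 = (β - α) / (2α)`. -/

open Set Topology

theorem HasDerivAt.div_id {h : ℝ → ℝ} {h' s : ℝ} (hh : HasDerivAt h h' s) (hs : s ≠ 0) :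
    HasDerivAt (fun t => h t / t) ((h' - h s / s) / s) s := by
  refine (hh.fun_div (hasDerivAt_id' s) hs).congr_deriv ?_
  field_simp

noncomputable def dslopePrimitive (φ : ℝ → ℝ) (s : ℝ) : ℝ :=
  ∫ x in (0:ℝ)..s, dslope φ 0 x

section dslopePrimitive

variable {φ φ' φ'' : ℝ → ℝ}

theorem continuousOn_dslope_Ici (hφ : ∀ x, 0 ≤ x → DifferentiableAt ℝ φ x) :
    ContinuousOn (dslope φ 0) (Ici 0) := by
  intro x hx
  rcases eq_or_ne x 0 with rfl | hx0
  · exact (continuousAt_dslope_same.2 (hφ 0 le_rfl)).continuousWithinAt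
  · exact ((continuousAt_dslope_of_ne hx0).2 (hφ x hx).continuousAt).continuousWithinAt

theorem hasDerivAt_dslopePrimitive (hφ : ∀ x, 0 ≤ x → DifferentiableAt ℝ φ x) {s : ℝ}
    (hs : 0 < s) : HasDerivAt (dslopePrimitive φ) (slope φ 0 s) s := by
  have hc := continuousOn_dslope_Ici hφ
  rw [← dslope_of_ne φ hs.ne']
  exact intervalIntegral.integral_hasDerivAt_right
    ((hc.mono Icc_subset_Ici_self).intervalIntegrable_of_Icc hs.le)
    ((hc.mono Ioi_subset_Ici_self).stronglyMeasurableAtFilter isOpen_Ioi s hs)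
    (hc.continuousAt (Ici_mem_nhds hs))

theorem deriv_dslopePrimitive (hφ : ∀ x, 0 ≤ x → DifferentiableAt ℝ φ x) {s : ℝ} (hs : 0 < s) :
    deriv (dslopePrimitive φ) s = slope φ 0 s :=
  (hasDerivAt_dslopePrimitive hφ hs).deriv

theorem hasDerivAt_slope_zero {d s : ℝ} (hφ : HasDerivAt φ d s) (hs : s ≠ 0) :
    HasDerivAt (slope φ 0) ((d - slope φ 0 s) / s) s := by
  simpa [slope_fun_def_field] using (hφ.sub_const (φ 0)).div_id hs

theorem deriv_deriv_dslopePrimitive (hφ : ∀ x, 0 ≤ x → HasDerivAt φ (φ' x) x) {s : ℝ}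
    (hs : 0 < s) : deriv (deriv (dslopePrimitive φ)) s = (φ' s - slope φ 0 s) / s := by
  have hF' : deriv (dslopePrimitive φ) =ᶠ[𝓝 s] slope φ 0 := by
    filter_upwards [Ioi_mem_nhds hs] with t ht
      using deriv_dslopePrimitive (fun x hx => (hφ x hx).differentiableAt) ht
  rw [hF'.deriv_eq, (hasDerivAt_slope_zero (hφ s hs.le) hs.ne').deriv]

theorem deriv_deriv_deriv_dslopePrimitive (hφ : ∀ x, 0 ≤ x → HasDerivAt φ (φ' x) x)
    (hφ' : ∀ x, 0 < x → HasDerivAt φ' (φ'' x) x) {s : ℝ} (hs : 0 < s) :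
    deriv (deriv (deriv (dslopePrimitive φ))) s
      = (φ'' s - 2 * ((φ' s - slope φ 0 s) / s)) / s := by
  have hF'' : deriv (deriv (dslopePrimitive φ)) =ᶠ[𝓝 s] fun t => (φ' t - slope φ 0 t) / t := by
    filter_upwards [Ioi_mem_nhds hs] with t ht using deriv_deriv_dslopePrimitive hφ ht
  rw [hF''.deriv_eq, (((hφ' s hs).fun_sub (hasDerivAt_slope_zero (hφ s hs.le) hs.ne')).div_id
    hs.ne').deriv]
  ring

theorem tendsto_sub_slope_div_nhdsGT (hφ : ∀ x, 0 ≤ x → HasDerivAt φ (φ' x) x)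
    (hφ' : ∀ x, 0 ≤ x → HasDerivAt φ' (φ'' x) x) (hφ'' : ContinuousWithinAt φ'' (Ioi 0) 0) :
    Tendsto (fun s => (φ' s - slope φ 0 s) / s) (𝓝[>] 0) (𝓝 (φ'' 0 / 2)) := by
  -- the quotient is `f s / s ^ 2`, and `f' s / (s ^ 2)' = φ'' s / 2`: l'Hôpital
  set f : ℝ → ℝ := fun t => t * φ' t - (φ t - φ 0)
  have hf : ∀ᶠ t in 𝓝[>] 0, HasDerivAt f (t * φ'' t) t := by
    filter_upwards [self_mem_nhdsWithin] with t (ht : 0 < t)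
    refine (((hasDerivAt_id' t).mul (hφ' t ht.le)).sub
      ((hφ t ht.le).sub_const (φ 0))).congr_deriv ?_
    ring
  have hg : ∀ᶠ t in 𝓝[>] (0 : ℝ), HasDerivAt (fun t => t ^ 2) (2 * t) t :=
    Eventually.of_forall fun t => by simpa using hasDerivAt_pow 2 t
  have hg' : ∀ᶠ t in 𝓝[>] (0 : ℝ), 2 * t ≠ 0 := by
    filter_upwards [self_mem_nhdsWithin] with t (ht : 0 < t) using by positivity
  have hf0 : Tendsto f (𝓝[>] 0) (𝓝 0) := by
    have hc : ContinuousAt f 0 := (continuousAt_id.mul (hφ' 0 le_rfl).continuousAt).sub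
      ((hφ 0 le_rfl).continuousAt.sub continuousAt_const)
    simpa [f] using hc.tendsto.mono_left nhdsWithin_le_nhds
  have hg0 : Tendsto (fun t : ℝ => t ^ 2) (𝓝[>] 0) (𝓝 0) := by
    simpa using ((continuous_pow 2).tendsto (0 : ℝ)).mono_left nhdsWithin_le_nhds
  have hdiv : Tendsto (fun t => t * φ'' t / (2 * t)) (𝓝[>] 0) (𝓝 (φ'' 0 / 2)) := by
    refine (hφ''.tendsto.div_const 2).congr' ?_
    filter_upwards [self_mem_nhdsWithin] with t (ht : 0 < t)
    field_simp
  refine (HasDerivAt.lhopital_zero_nhdsGT hf hg hg' hf0 hg0 hdiv).congr' ?_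
  filter_upwards [self_mem_nhdsWithin] with t (ht : 0 < t)
  simp only [f, slope_def_field, sub_zero]
  field_simp

theorem tendsto_deriv_expr_dslopePrimitive (hφ : ∀ x, 0 ≤ x → HasDerivAt φ (φ' x) x)
    (hφ' : ∀ x, 0 ≤ x → HasDerivAt φ' (φ'' x) x) (hφ'' : ContinuousWithinAt φ'' (Ioi 0) 0)
    (hφ'0 : φ' 0 ≠ 0) :
    Tendsto (fun s => deriv (deriv (dslopePrimitive φ)) s
        + s * deriv (deriv (deriv (dslopePrimitive φ))) s
        - s * deriv (deriv (dslopePrimitive φ)) s ^ 2 / deriv (dslopePrimitive φ) s)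
      (𝓝[>] 0) (𝓝 (φ'' 0 / 2)) := by
  have hslope : Tendsto (slope φ 0) (𝓝[>] 0) (𝓝 (φ' 0)) :=
    (hasDerivAt_iff_tendsto_slope.1 (hφ 0 le_rfl)).mono_left
      (nhdsWithin_mono 0 fun x (hx : 0 < x) => hx.ne')
  have hid : Tendsto (fun s : ℝ => s) (𝓝[>] 0) (𝓝 0) := nhdsWithin_le_nhds
  have hg := tendsto_sub_slope_div_nhdsGT hφ hφ' hφ''
  have hlim := (hφ''.tendsto.sub hg).sub ((hid.mul (hg.pow 2)).div hslope hφ'0)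
  rw [zero_mul, zero_div, sub_zero, sub_half] at hlim
  refine hlim.congr' ?_
  filter_upwards [self_mem_nhdsWithin, hslope.eventually_ne hφ'0] with s (hs : 0 < s) hslope_s
  rw [deriv_dslopePrimitive (fun x hx => (hφ x hx).differentiableAt) hs,
    deriv_deriv_dslopePrimitive hφ hs,
    deriv_deriv_deriv_dslopePrimitive hφ (fun x hx => hφ' x hx.le) hs, Pi.div_apply]
  field_simp
  ring

end dslopePrimitive

namespace fFJ

noncomputable def phi (α β x : ℝ) : ℝ := (α + log (1 + x)) ^ (β + 1) / ((β + 1) * α ^ β)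

noncomputable def phi' (α β x : ℝ) : ℝ := (α + log (1 + x)) ^ β / (α ^ β * (1 + x))

noncomputable def phi'' (α β x : ℝ) : ℝ :=
  (β * (α + log (1 + x)) ^ (β - 1) - (α + log (1 + x)) ^ β) / (α ^ β * (1 + x) ^ 2)

variable {α β x : ℝ}

theorem eq_dslopePrimitive : fFJ α β = dslopePrimitive (phi α β) := by
  funext s
  rw [fFJ, dslopePrimitive, ← intervalIntegral.integral_const_mul]
  refine intervalIntegral.integral_congr_ae ?_
  filter_upwards [MeasureTheory.measure_eq_zero_iff_ae_notMem.1 (Real.volume_singleton (a := 0))]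
    with t (ht : t ≠ 0) _
  rw [dslope_of_ne _ ht, slope_def_field, phi, phi, add_zero, log_one, add_zero]
  ring

theorem hasDerivAt_log_one_add (hx : 0 ≤ x) :
    HasDerivAt (fun t => α + log (1 + t)) (1 / (1 + x)) x := by
  simpa using (((hasDerivAt_id' x).const_add 1).log (by positivity)).const_add α

theorem add_log_one_add_pos (hα : 0 < α) (hx : 0 ≤ x) : 0 < α + log (1 + x) := by
  have := log_nonneg (by linarith : (1 : ℝ) ≤ 1 + x)
  linarith

theorem hasDerivAt_phi (hα : 0 < α) (hβ : β + 1 ≠ 0) (hx : 0 ≤ x) :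
    HasDerivAt (phi α β) (phi' α β x) x := by
  have h := ((hasDerivAt_log_one_add (α := α) hx).rpow_const (p := β + 1)
    (Or.inl (add_log_one_add_pos hα hx).ne')).div_const ((β + 1) * α ^ β)
  refine h.congr_deriv ?_
  rw [phi', add_sub_cancel_right]
  field_simp

theorem hasDerivAt_phi' (hα : 0 < α) (hx : 0 ≤ x) :
    HasDerivAt (phi' α β) (phi'' α β x) x := by
  have h := ((hasDerivAt_log_one_add (α := α) hx).rpow_const (p := β)
    (Or.inl (add_log_one_add_pos hα hx).ne')).div
    (((hasDerivAt_id' x).const_add 1).const_mul (α ^ β)) (by positivity)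
  refine h.congr_deriv ?_
  rw [phi'']
  field_simp

theorem continuousAt_phi''_zero (hα : 0 < α) : ContinuousAt (phi'' α β) 0 := by
  have hψ0 : α + log (1 + 0) ≠ 0 := by simpa using hα.ne'
  unfold phi''
  fun_prop (disch := first | exact Or.inl hψ0 | positivity)

theorem phi'_zero (hα : 0 < α) : phi' α β 0 = 1 := by
  have := (rpow_pos_of_pos hα β).ne'
  simp [phi', this]

theorem phi''_zero (hα : 0 < α) : phi'' α β 0 = (β - α) / α := by
  have := (rpow_pos_of_pos hα β).ne'
  simp only [phi'', add_zero, log_one, rpow_sub hα, rpow_one]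
  field_simp

end fFJ

theorem stmt_13 (α β : ℝ) (hβ : 0 ≤ β) (hαβ : β < α) :
    Filter.Tendsto
      (fun s => deriv (deriv (fFJ α β)) s + s * deriv (deriv (deriv (fFJ α β))) s
        - s * (deriv (deriv (fFJ α β)) s) ^ 2 / deriv (fFJ α β) s)
      (nhdsWithin 0 (Set.Ioi 0)) (nhds (-(α - β) / (2 * α))) := by
  have hα : 0 < α := hβ.trans_lt hαβ
  have hlim := tendsto_deriv_expr_dslopePrimitive (φ'' := fFJ.phi'' α β)
    (fun x hx => fFJ.hasDerivAt_phi hα (by positivity) hx) (fun x hx => fFJ.hasDerivAt_phi' hα hx)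
    (fFJ.continuousAt_phi''_zero hα).continuousWithinAt (by simp [fFJ.phi'_zero hα])
  rw [fFJ.eq_dslopePrimitive]
  convert hlim using 2
  rw [fFJ.phi''_zero hα]
  ring
end

section
/- There exist constants 0 < c ≤ C and r₀ > 1 such that for all r ≥ r₀, c·(log r)^((β+2)/2) ≤ ρ(r) ≤ C·(log r)^((β+2)/2). -/
open Real

/-!
Put `A t = α + log (1 + t²)` and `k = (β + 2) / 2`. The derivative of `A ^ k` is
`(β + 2) A^{β/2} t / (1 + t²)`, while `(β + 2) α^{β/2}` times the integrand of `ρ` is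
`(β + 2) A^{β/2} / √(1 + t²)`. Since `t / (1 + t²) ≤ 1 / √(1 + t²) ≤ √2 t / (1 + t²)` for `t ≥ 1`,
integrating these comparisons pins `ρ r` between constant multiples of `A r ^ k` (up to additive
constants), and `log r ≤ A r ≤ 4 log r` once `log r ≥ α + 1`. On the lower side the constant
`A 0 ^ k = α ^ k` is absorbed by superadditivity: `α ^ k + (log r) ^ k ≤ (α + log r) ^ k`
for `k ≥ 1`.
-/

noncomputable def shiftedLog (α t : ℝ) : ℝ := α + Real.log (1 + t ^ 2)

noncomputable def rhoIntegrand (α β t : ℝ) : ℝ :=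
  Real.sqrt (shiftedLog α t ^ β / (α ^ β * (1 + t ^ 2)))

noncomputable def rhoPrimitive (α β t : ℝ) : ℝ := shiftedLog α t ^ ((β + 2) / 2)

lemma div_one_add_sq_le_inv_sqrt (t : ℝ) : t / (1 + t ^ 2) ≤ (√(1 + t ^ 2))⁻¹ := by
  have ht : t ≤ √(1 + t ^ 2) := (le_abs_self t).trans (abs_le_sqrt (by linarith))
  rw [← div_self_mul_self' (√(1 + t ^ 2)), Real.mul_self_sqrt (by positivity)]
  exact div_le_div_of_nonneg_right ht (by positivity)

lemma inv_sqrt_le_sqrt_two_mul_div_one_add_sq {t : ℝ} (ht : 1 ≤ t) :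
    (√(1 + t ^ 2))⁻¹ ≤ √2 * (t / (1 + t ^ 2)) := by
  have hs : √(1 + t ^ 2) ≤ √2 * t :=
    calc √(1 + t ^ 2) ≤ √(2 * t ^ 2) := Real.sqrt_le_sqrt (by nlinarith)
      _ = √2 * t := by rw [Real.sqrt_mul zero_le_two, Real.sqrt_sq (by linarith)]
  rw [← div_self_mul_self' (√(1 + t ^ 2)), Real.mul_self_sqrt (by positivity), mul_div_assoc']
  exact div_le_div_of_nonneg_right hs (by positivity)

lemma le_shiftedLog (α t : ℝ) : α ≤ shiftedLog α t :=
  le_add_of_nonneg_right (Real.log_nonneg (by nlinarith))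

lemma shiftedLog_pos {α : ℝ} (hα : 0 < α) (t : ℝ) : 0 < shiftedLog α t :=
  hα.trans_le (le_shiftedLog α t)

lemma continuous_shiftedLog (α : ℝ) : Continuous (shiftedLog α) :=
  continuous_const.add <|
    (continuous_const.add (continuous_pow 2)).log fun t => (by positivity : (0 : ℝ) < 1 + t ^ 2).ne'

lemma continuous_rhoIntegrand {α : ℝ} (hα : 0 < α) (β : ℝ) : Continuous (rhoIntegrand α β) :=
  (((continuous_shiftedLog α).rpow_const fun t => Or.inl (shiftedLog_pos hα t).ne').div
    (continuous_const.mul (continuous_const.add (continuous_pow 2)))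
    fun t => (by positivity : (0 : ℝ) < α ^ β * (1 + t ^ 2)).ne').sqrt

lemma rhoFJ_eq_integral (α β r : ℝ) :
    rhoFJ α β r = ∫ t in (0:ℝ)..r, rhoIntegrand α β t :=
  rfl

lemma mul_rhoIntegrand {α β : ℝ} (hα : 0 < α) (t : ℝ) :
    (β + 2) * α ^ (β / 2) * rhoIntegrand α β t =
      (β + 2) * shiftedLog α t ^ (β / 2) * (√(1 + t ^ 2))⁻¹ := by
  have hA := shiftedLog_pos hα t
  rw [rhoIntegrand, Real.sqrt_div' _ (by positivity), Real.sqrt_mul' _ (by positivity),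
    Real.sqrt_eq_rpow, Real.sqrt_eq_rpow, ← Real.rpow_mul hA.le, ← Real.rpow_mul hα.le,
    mul_one_div]
  field_simp

lemma hasDerivAt_rhoPrimitive {α : ℝ} (hα : 0 < α) (β t : ℝ) :
    HasDerivAt (rhoPrimitive α β)
      ((β + 2) * shiftedLog α t ^ (β / 2) * (t / (1 + t ^ 2))) t := by
  have hlog : HasDerivAt (shiftedLog α) (2 * t / (1 + t ^ 2)) t :=
    ((((hasDerivAt_pow 2 t).const_add 1).log (by positivity)).const_add α).congr_deriv
      (by norm_num)
  have h := hlog.rpow_const (p := (β + 2) / 2) (Or.inl (shiftedLog_pos hα t).ne')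
  rw [show (β + 2) / 2 - 1 = β / 2 by ring] at h
  exact h.congr_deriv (by ring)

lemma continuous_rhoPrimitive {α : ℝ} (hα : 0 < α) (β : ℝ) : Continuous (rhoPrimitive α β) :=
  continuous_iff_continuousAt.2 fun t => (hasDerivAt_rhoPrimitive hα β t).continuousAt

lemma deriv_rhoPrimitive_le_mul_rhoIntegrand {α β : ℝ} (hα : 0 < α) (hβ : -2 ≤ β) (t : ℝ) :
    (β + 2) * shiftedLog α t ^ (β / 2) * (t / (1 + t ^ 2)) ≤
      (β + 2) * α ^ (β / 2) * rhoIntegrand α β t := by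
  have := shiftedLog_pos hα t
  have : 0 ≤ β + 2 := by linarith
  rw [mul_rhoIntegrand hα]
  gcongr
  exact div_one_add_sq_le_inv_sqrt t

lemma mul_rhoIntegrand_le_sqrt_two_mul_deriv {α β : ℝ} (hα : 0 < α) (hβ : -2 ≤ β) {t : ℝ}
    (ht : 1 ≤ t) :
    (β + 2) * α ^ (β / 2) * rhoIntegrand α β t ≤
      √2 * ((β + 2) * shiftedLog α t ^ (β / 2) * (t / (1 + t ^ 2))) := by
  have := shiftedLog_pos hα t
  have : 0 ≤ β + 2 := by linarith
  rw [mul_rhoIntegrand hα, mul_left_comm]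
  gcongr
  exact inv_sqrt_le_sqrt_two_mul_div_one_add_sq ht

lemma rhoPrimitive_sub_le_mul_rhoFJ {α β : ℝ} (hα : 0 < α) (hβ : -2 ≤ β) {r : ℝ}
    (hr : 0 ≤ r) :
    rhoPrimitive α β r - rhoPrimitive α β 0 ≤ (β + 2) * α ^ (β / 2) * rhoFJ α β r := by
  rw [rhoFJ_eq_integral, ← intervalIntegral.integral_const_mul]
  exact intervalIntegral.sub_le_integral_of_hasDeriv_right_of_le hr
    (continuous_rhoPrimitive hα β).continuousOn
    (fun t _ => (hasDerivAt_rhoPrimitive hα β t).hasDerivWithinAt)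
    (continuous_const.mul (continuous_rhoIntegrand hα β)).integrableOn_Icc
    fun t _ => deriv_rhoPrimitive_le_mul_rhoIntegrand hα hβ t

lemma mul_rhoFJ_sub_le {α β : ℝ} (hα : 0 < α) (hβ : -2 ≤ β) {r : ℝ} (hr : 1 ≤ r) :
    (β + 2) * α ^ (β / 2) * (rhoFJ α β r - rhoFJ α β 1) ≤
      √2 * rhoPrimitive α β r - √2 * rhoPrimitive α β 1 := by
  have hint (a b : ℝ) : IntervalIntegrable (rhoIntegrand α β) MeasureTheory.volume a b :=
    (continuous_rhoIntegrand hα β).intervalIntegrable a b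
  rw [rhoFJ_eq_integral, rhoFJ_eq_integral,
    intervalIntegral.integral_interval_sub_left (hint 0 r) (hint 0 1),
    ← intervalIntegral.integral_const_mul]
  exact intervalIntegral.integral_le_sub_of_hasDeriv_right_of_le hr
    (continuous_const.mul (continuous_rhoPrimitive hα β)).continuousOn
    (fun t _ => ((hasDerivAt_rhoPrimitive hα β t).const_mul √2).hasDerivWithinAt)
    (continuous_const.mul (continuous_rhoIntegrand hα β)).integrableOn_Icc
    fun t ht => mul_rhoIntegrand_le_sqrt_two_mul_deriv hα hβ ht.1.le

lemma log_rpow_le_rhoPrimitive_sub {α β : ℝ} (hα : 0 ≤ α) (hβ : 0 ≤ β) {r : ℝ} (hr : 1 ≤ r) :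
    Real.log r ^ ((β + 2) / 2) ≤ rhoPrimitive α β r - rhoPrimitive α β 0 := by
  have hlog : Real.log r ≤ Real.log (1 + r ^ 2) := Real.log_le_log (by linarith) (by nlinarith)
  have hsuper := Real.add_rpow_le_rpow_add hα (Real.log_nonneg hr) (by linarith : 1 ≤ (β + 2) / 2)
  have hmono : (α + Real.log r) ^ ((β + 2) / 2) ≤ rhoPrimitive α β r :=
    Real.rpow_le_rpow (by linarith [Real.log_nonneg hr]) (by unfold shiftedLog; linarith)
      (by linarith)
  have hzero : rhoPrimitive α β 0 = α ^ ((β + 2) / 2) := by simp [rhoPrimitive, shiftedLog]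
  linarith

lemma rhoPrimitive_le {α β : ℝ} (hα : 0 ≤ α) (hβ : -2 ≤ β) {r : ℝ} (hr : 1 ≤ r)
    (hαr : α + 1 ≤ Real.log r) :
    rhoPrimitive α β r ≤ 4 ^ ((β + 2) / 2) * Real.log r ^ ((β + 2) / 2) := by
  have hlog : Real.log (1 + r ^ 2) ≤ Real.log 2 + 2 * Real.log r :=
    calc Real.log (1 + r ^ 2) ≤ Real.log (2 * r ^ 2) :=
          Real.log_le_log (by positivity) (by nlinarith)
      _ = Real.log 2 + 2 * Real.log r := by
        rw [Real.log_mul two_ne_zero (by positivity), Real.log_pow, Nat.cast_two]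
  have hbase : shiftedLog α r ≤ 4 * Real.log r := by
    unfold shiftedLog
    linarith [Real.log_two_lt_d9]
  rw [← Real.mul_rpow (by norm_num) (by linarith)]
  exact Real.rpow_le_rpow (hα.trans (le_shiftedLog α r)) hbase (by linarith)

lemma inv_mul_log_rpow_le_rhoFJ {α β : ℝ} (hα : 0 < α) (hβ : 0 ≤ β) {r : ℝ} (hr : 1 ≤ r) :
    ((β + 2) * α ^ (β / 2))⁻¹ * Real.log r ^ ((β + 2) / 2) ≤ rhoFJ α β r := by
  rw [inv_mul_le_iff₀ (by positivity)]
  exact (log_rpow_le_rhoPrimitive_sub hα.le hβ hr).trans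
    (rhoPrimitive_sub_le_mul_rhoFJ hα (by linarith) (by linarith))

lemma rhoFJ_le_add {α β : ℝ} (hα : 0 < α) (hβ : -2 < β) {r : ℝ} (hr : 1 ≤ r)
    (hαr : α + 1 ≤ Real.log r) :
    rhoFJ α β r ≤ rhoFJ α β 1 +
      √2 * 4 ^ ((β + 2) / 2) / ((β + 2) * α ^ (β / 2)) * Real.log r ^ ((β + 2) / 2) := by
  have hc : 0 < (β + 2) * α ^ (β / 2) := mul_pos (by linarith) (by positivity)
  have hF1 : 0 ≤ rhoPrimitive α β 1 := Real.rpow_nonneg (shiftedLog_pos hα 1).le _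
  rw [div_mul_eq_mul_div, ← sub_le_iff_le_add', le_div_iff₀' hc]
  calc (β + 2) * α ^ (β / 2) * (rhoFJ α β r - rhoFJ α β 1)
      ≤ √2 * rhoPrimitive α β r - √2 * rhoPrimitive α β 1 := mul_rhoFJ_sub_le hα hβ.le hr
    _ ≤ √2 * rhoPrimitive α β r := by nlinarith [Real.sqrt_nonneg 2]
    _ ≤ √2 * (4 ^ ((β + 2) / 2) * Real.log r ^ ((β + 2) / 2)) := by
      gcongr
      exact rhoPrimitive_le hα.le hβ.le hr hαr
    _ = √2 * 4 ^ ((β + 2) / 2) * Real.log r ^ ((β + 2) / 2) := by ring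

theorem stmt_14 (α β : ℝ) (hβ : 0 ≤ β) (hαβ : β < α) :
    ∃ c C r₀ : ℝ, 0 < c ∧ c ≤ C ∧ 1 < r₀ ∧
      ∀ r : ℝ, r₀ ≤ r →
        c * (Real.log r) ^ ((β + 2) / 2) ≤ rhoFJ α β r ∧
        rhoFJ α β r ≤ C * (Real.log r) ^ ((β + 2) / 2) := by
  have hα : 0 < α := hβ.trans_lt hαβ
  set k := (β + 2) / 2
  set c₀ := (β + 2) * α ^ (β / 2)
  have hc₀ : 0 < c₀ := by positivity
  have hρ₁ : 0 ≤ rhoFJ α β 1 :=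
    intervalIntegral.integral_nonneg zero_le_one fun _ _ => Real.sqrt_nonneg _
  have hK : 1 ≤ √2 * 4 ^ k :=
    one_le_mul_of_one_le_of_one_le (by simp) (Real.one_le_rpow (by norm_num) (by positivity))
  refine ⟨c₀⁻¹, rhoFJ α β 1 + √2 * 4 ^ k / c₀, Real.exp (α + 1), by positivity, ?_,
    Real.one_lt_exp_iff.2 (by linarith), fun r hr => ?_⟩
  · rw [inv_eq_one_div]
    linarith [div_le_div_of_nonneg_right hK hc₀.le]
  have hr1 : 1 ≤ r := (Real.one_le_exp (by linarith)).trans hr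
  have hαr : α + 1 ≤ Real.log r := (Real.le_log_iff_exp_le (by linarith)).2 hr
  have hL : 1 ≤ Real.log r ^ k := Real.one_le_rpow (by linarith) (by positivity)
  refine ⟨inv_mul_log_rpow_le_rhoFJ hα hβ hr1, ?_⟩
  calc rhoFJ α β r ≤ rhoFJ α β 1 + √2 * 4 ^ k / c₀ * Real.log r ^ k :=
        rhoFJ_le_add hα (by linarith) hr1 hαr
    _ ≤ (rhoFJ α β 1 + √2 * 4 ^ k / c₀) * Real.log r ^ k := by
      rw [add_mul]
      gcongr
      exact le_mul_of_one_le_right hρ₁ hL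
end

section
/- There exist constants 0 < c ≤ C and r₀ > 1 such that for all r ≥ r₀, c·(log r)^((β+1)·n) ≤ V(r) ≤ C·(log r)^((β+1)·n). -/
open Real

/-- The Euclidean radial volume integral (up to the constant volume of `S^(2n-1)`). -/
noncomputable def VFJ (n : ℕ) (α β : ℝ) (r : ℝ) : ℝ :=
  ∫ t in (0:ℝ)..r,
    ((α + Real.log (1 + t ^ 2)) ^ β / (α ^ β * (1 + t ^ 2))) *
      (((α + Real.log (1 + t ^ 2)) ^ (β + 1) - α ^ (β + 1)) / ((β + 1) * α ^ β * t ^ 2))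
        ^ (n - 1) * t ^ (2 * n - 1)

/-!
The integrand is an exact derivative. With `P(t) = (α + log (1 + t²))^(β+1) - α^(β+1)` one has
`P'(t) = 2t (β+1) (α + log (1 + t²))^β / (1 + t²)`, and the integrand is `P' P^(n-1) / (2 c^n)` with
`c = (β+1) α^β`, so `V(r) = P(r)^n / (2n c^n)`. For `log r ≥ α + 1` the quantity
`α + log (1 + r²)` lies between `2 log r` and `4 log r`, hence `P(r)` lies between
`(log r)^(β+1)` and `4^(β+1) (log r)^(β+1)`.
-/

namespace VFJ

variable {n : ℕ} {α β : ℝ}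

noncomputable def integrand (n : ℕ) (α β t : ℝ) : ℝ :=
  ((α + log (1 + t ^ 2)) ^ β / (α ^ β * (1 + t ^ 2))) *
    (((α + log (1 + t ^ 2)) ^ (β + 1) - α ^ (β + 1)) / ((β + 1) * α ^ β * t ^ 2))
      ^ (n - 1) * t ^ (2 * n - 1)

noncomputable def potential (α β t : ℝ) : ℝ :=
  (α + log (1 + t ^ 2)) ^ (β + 1) - α ^ (β + 1)

lemma add_log_one_add_sq_pos (hα : 0 < α) (t : ℝ) : 0 < α + log (1 + t ^ 2) := by
  have : 0 ≤ log (1 + t ^ 2) := log_nonneg (by nlinarith)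
  linarith

lemma hasDerivAt_potential (hα : 0 < α) (t : ℝ) :
    HasDerivAt (potential α β)
      (2 * t / (1 + t ^ 2) * (β + 1) * (α + log (1 + t ^ 2)) ^ β) t := by
  have hlog : HasDerivAt (fun t : ℝ => α + log (1 + t ^ 2)) (2 * t / (1 + t ^ 2)) t := by
    have h := ((hasDerivAt_pow 2 t).const_add 1).log (by positivity)
    simpa using h.const_add α
  have h := (hlog.rpow_const (p := β + 1) (Or.inl (add_log_one_add_sq_pos hα t).ne')).sub_const
    (α ^ (β + 1))
  rwa [add_sub_cancel_right] at h

/-- At `t = 0` the division by `t ^ 2` in `integrand` returns the junk value `0`, but there the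
factor `t ^ (2n - 1)` vanishes anyway. -/
lemma integrand_eq (hα : 0 < α) (hn : n ≠ 0) (t : ℝ) :
    integrand n α β t = (α + log (1 + t ^ 2)) ^ β * potential α β t ^ (n - 1) * t /
      ((1 + t ^ 2) * α ^ β * ((β + 1) * α ^ β) ^ (n - 1)) := by
  obtain ⟨m, rfl⟩ : ∃ m, n = m + 1 := Nat.exists_eq_succ_of_ne_zero hn
  have hpow : 2 * (m + 1) - 1 = 2 * m + 1 := by omega
  rcases eq_or_ne t 0 with rfl | ht
  · simp [integrand, hpow]
  · have := (rpow_pos_of_pos hα β).ne'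
    simp only [integrand, potential, hpow, Nat.add_sub_cancel, div_pow, mul_pow]
    field_simp
    ring

lemma continuous_integrand (hα : 0 < α) (hβ : β + 1 ≠ 0) (hn : n ≠ 0) :
    Continuous (integrand n α β) := by
  rw [funext (integrand_eq hα hn)]
  refine Continuous.div ?_ (by fun_prop) fun t => ?_
  · have hw : Continuous fun t : ℝ => α + log (1 + t ^ 2) :=
      continuous_const.add (by fun_prop (disch := intro t; positivity))
    have hw0 (p : ℝ) (t : ℝ) : α + log (1 + t ^ 2) ≠ 0 ∨ 0 ≤ p :=
      Or.inl (add_log_one_add_sq_pos hα t).ne'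
    exact ((hw.rpow_const (hw0 β)).mul
      (((hw.rpow_const (hw0 (β + 1))).sub continuous_const).pow _)).mul continuous_id
  · have := (rpow_pos_of_pos hα β).ne'
    exact mul_ne_zero (mul_ne_zero (by positivity) this) (pow_ne_zero _ (mul_ne_zero hβ this))

lemma hasDerivAt_potential_pow (hα : 0 < α) (hβ : β + 1 ≠ 0) (hn : n ≠ 0) (t : ℝ) :
    HasDerivAt (fun t => potential α β t ^ n / (2 * n * ((β + 1) * α ^ β) ^ n))
      (integrand n α β t) t := by
  obtain ⟨m, rfl⟩ : ∃ m, n = m + 1 := Nat.exists_eq_succ_of_ne_zero hn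
  refine (((hasDerivAt_potential hα t).pow (m + 1)).div_const _).congr_deriv ?_
  have := (rpow_pos_of_pos hα β).ne'
  rw [integrand_eq hα hn]
  simp only [Nat.add_sub_cancel, pow_succ]
  field_simp

theorem eq_potential_pow (hα : 0 < α) (hβ : β + 1 ≠ 0) (hn : n ≠ 0) (r : ℝ) :
    VFJ n α β r = potential α β r ^ n / (2 * n * ((β + 1) * α ^ β) ^ n) := by
  have h := intervalIntegral.integral_eq_sub_of_hasDerivAt
    (fun t _ => hasDerivAt_potential_pow hα hβ hn t)
    ((continuous_integrand hα hβ hn).intervalIntegrable 0 r)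
  change ∫ t in (0 : ℝ)..r, integrand n α β t = _
  simpa [potential, hn] using h

variable {r : ℝ}

lemma two_mul_log_le_log_one_add_sq (hr : 0 < r) : 2 * log r ≤ log (1 + r ^ 2) := by
  rw [← log_rpow hr]
  exact log_le_log (by positivity) (by norm_num)

lemma log_one_add_sq_le (hr : 1 ≤ r) : log (1 + r ^ 2) ≤ log 2 + 2 * log r := by
  rw [← log_rpow (by positivity), ← log_mul (by norm_num) (by positivity)]
  exact log_le_log (by positivity) (by norm_num; nlinarith)

lemma log_rpow_le_potential (hα : 0 ≤ α) (hβ : 0 ≤ β) (hr : exp (α + 1) ≤ r) :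
    log r ^ (β + 1) ≤ potential α β r := by
  have hr0 : 0 < r := (exp_pos _).trans_le hr
  have hL : α + 1 ≤ log r := (le_log_iff_exp_le hr0).2 hr
  have hweight : 2 * log r ≤ α + log (1 + r ^ 2) := by
    linarith [two_mul_log_le_log_one_add_sq hr0]
  have h2 : (2 : ℝ) ≤ 2 ^ (β + 1) := by
    simpa using rpow_le_rpow_of_exponent_le (x := 2) (by norm_num) (by linarith : 1 ≤ β + 1)
  have hα' : α ^ (β + 1) ≤ log r ^ (β + 1) := by gcongr; linarith
  calc log r ^ (β + 1) ≤ 2 ^ (β + 1) * log r ^ (β + 1) - α ^ (β + 1) := by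
        nlinarith [rpow_nonneg (by linarith : 0 ≤ log r) (β + 1)]
    _ = (2 * log r) ^ (β + 1) - α ^ (β + 1) := by rw [mul_rpow (by norm_num) (by linarith)]
    _ ≤ potential α β r := by
        unfold potential
        gcongr
        linarith

lemma potential_le (hα : 0 ≤ α) (hβ : 0 ≤ β) (hr : exp (α + 1) ≤ r) :
    potential α β r ≤ 4 ^ (β + 1) * log r ^ (β + 1) := by
  have hr0 : 0 < r := (exp_pos _).trans_le hr
  have hL : α + 1 ≤ log r := (le_log_iff_exp_le hr0).2 hr
  have hr1 : 1 ≤ r := (one_le_exp (by linarith)).trans hr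
  have hweight : α + log (1 + r ^ 2) ≤ 4 * log r := by
    linarith [log_one_add_sq_le hr1, log_two_lt_d9]
  calc potential α β r ≤ (α + log (1 + r ^ 2)) ^ (β + 1) := by
        unfold potential; linarith [rpow_nonneg hα (β + 1)]
    _ ≤ (4 * log r) ^ (β + 1) := by
        gcongr
        linarith [log_nonneg (by nlinarith : (1 : ℝ) ≤ 1 + r ^ 2)]
    _ = 4 ^ (β + 1) * log r ^ (β + 1) := mul_rpow (by norm_num) (by linarith)

end VFJ

theorem stmt_15 (n : ℕ) (hn : 2 ≤ n) (α β : ℝ) (hβ : 0 ≤ β) (hαβ : β < α) :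
    ∃ c C r₀ : ℝ, 0 < c ∧ c ≤ C ∧ 1 < r₀ ∧
      ∀ r : ℝ, r₀ ≤ r →
        c * (Real.log r) ^ ((β + 1) * n) ≤ VFJ n α β r ∧
        VFJ n α β r ≤ C * (Real.log r) ^ ((β + 1) * n) := by
  have hα : 0 < α := hβ.trans_lt hαβ
  have hn0 : n ≠ 0 := by omega
  set K : ℝ := 2 * n * ((β + 1) * α ^ β) ^ n
  have hK : 0 < K := by
    have := rpow_pos_of_pos hα β
    have : (0 : ℝ) < n := by exact_mod_cast Nat.pos_of_ne_zero hn0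
    positivity
  refine ⟨1 / K, 4 ^ ((β + 1) * n) / K, exp (α + 1), by positivity, ?_, one_lt_exp_iff.2 (by linarith),
    fun r hr => ?_⟩
  · gcongr
    exact one_le_rpow (by norm_num) (by positivity)
  have hL : 0 ≤ log r := log_nonneg ((one_le_exp (by linarith)).trans hr)
  rw [VFJ.eq_potential_pow hα (by linarith) hn0, rpow_mul_natCast hL,
    rpow_mul_natCast (by norm_num)]
  constructor
  · rw [one_div_mul_eq_div]
    gcongr
    exact VFJ.log_rpow_le_potential hα.le hβ hr
  · calc VFJ.potential α β r ^ n / K ≤ (4 ^ (β + 1) * log r ^ (β + 1)) ^ n / K := by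
          gcongr
          · exact (rpow_nonneg hL _).trans (VFJ.log_rpow_le_potential hα.le hβ hr)
          · exact VFJ.potential_le hα.le hβ hr
      _ = (4 ^ (β + 1)) ^ n / K * (log r ^ (β + 1)) ^ n := by ring
end
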